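/- arXiv:2305.07947 — 10 statements merged into one kernel-verified Lean document; each statement's English description precedes it below -/
import Mathlib

section
/- Let β>0, ξ>0, μ>0, γ>0, ρ>0, κ>0, ν>0, α>1, ω>1, and let (S*, I*, W*, J*) be a solution of the equilibrium equations of the reduced SIRWJS system with I* > 0, W* > 0, J* > 0 and ρ+μ - νβξW* ≠ 0. Then S* = (γ+μ)/β - νξ(γ+μ)W*/(ρ+μ). -/
/-- At a positive equilibrium of the reduced SIRWJS system (with `ξ > 0` and
`ρ + μ - νβξW* ≠ 0`), the susceptible component satisfies
`S* = (γ+μ)/β - νξ(γ+μ)W*/(ρ+μ)`. -/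
theorem sirwjs_equilibrium_S_formula
    (β ξ μ γ ρ κ ν α ω : ℝ)
    (hβ : 0 < β) (hξ : 0 < ξ) (hμ : 0 < μ) (hγ : 0 < γ) (hρ : 0 < ρ)
    (hκ : 0 < κ) (hν : 0 < ν) (hα : 1 < α) (hω : 1 < ω)
    (S I W J : ℝ)
    (hI0 : 0 < I) (hW0 : 0 < W) (hJ0 : 0 < J)
    (hden : ρ + μ - ν * β * ξ * W ≠ 0)
    (e1 : -β * (I + ξ * J) * S + ω * κ * W + μ * (1 - S) = 0)
    (e2 : β * (I + ξ * J) * S - (γ + μ) * I = 0)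
    (e3 : α * κ * (1 - S - I - W - J) - ω * κ * W - ν * β * (I + ξ * J) * W - μ * W = 0)
    (e4 : ν * β * (I + ξ * J) * W - (μ + ρ) * J = 0) :
    S = (γ + μ) / β - ν * ξ * (γ + μ) / (ρ + μ) * W := by
  have hρμ : ρ + μ ≠ 0 := by positivity
  have key : β * S * I * (ρ + μ) = (γ + μ) * I * (ρ + μ - ν * β * ξ * W) := by
    linear_combination ((ρ + μ) - ν * β * ξ * W) * e2 + β * ξ * S * e4
  have hI : I ≠ 0 := hI0.ne'
  field_simp
  apply mul_right_cancel₀ hI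
  linear_combination key
end

section
/- Let β>0, ξ>0, μ>0, γ>0, ρ>0, κ>0, ν>0, α>1, ω>1, and let (S*, I*, W*, J*) be a solution of the equilibrium equations of the reduced SIRWJS system with I* > 0, W* > 0, J* > 0 and ρ+μ - νβξW* ≠ 0. Then I* = μ(1/(γ+μ) - 1/β) + (ωκ/(γ+μ) + μνξ/(ρ+μ))·W*, and J* = νβI*W*/(ρ+μ - νβξW*). -/
/-!
Adding the S- and I-equations expresses I* through S* and W*. Eliminating the force of infection
β(I* + ξJ*) between the I- and J-equations and cancelling J* ≠ 0 gives
β(ρ+μ)S* = (γ+μ)(ρ+μ - νβξW*); substituting this S* yields the formula for I*.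
The formula for J* is the J-equation solved for J*.
-/

namespace SIRWJS

variable {K : Type*} [Field K] {β ξ μ γ ρ κ ν ω S I W J : K}

theorem J_mul_sub_eq (e4 : ν * β * (I + ξ * J) * W - (μ + ρ) * J = 0) :
    J * (ρ + μ - ν * β * ξ * W) = ν * β * I * W := by
  linear_combination -e4

theorem J_eq_div (hden : ρ + μ - ν * β * ξ * W ≠ 0)
    (e4 : ν * β * (I + ξ * J) * W - (μ + ρ) * J = 0) :
    J = ν * β * I * W / (ρ + μ - ν * β * ξ * W) := by
  rw [eq_div_iff hden]
  exact J_mul_sub_eq e4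

theorem mul_S_eq (hJ : J ≠ 0) (e2 : β * (I + ξ * J) * S - (γ + μ) * I = 0)
    (e4 : ν * β * (I + ξ * J) * W - (μ + ρ) * J = 0) :
    β * (μ + ρ) * S = (γ + μ) * (ρ + μ - ν * β * ξ * W) := by
  refine mul_right_cancel₀ hJ ?_
  linear_combination (γ + μ - β * S) * e4 + ν * β * W * e2

theorem mul_I_eq (e1 : -β * (I + ξ * J) * S + ω * κ * W + μ * (1 - S) = 0)
    (e2 : β * (I + ξ * J) * S - (γ + μ) * I = 0) :
    (γ + μ) * I = ω * κ * W + μ * (1 - S) := by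
  linear_combination -(e1 + e2)

theorem I_eq_of_mul_S_eq (hβ : β ≠ 0) (hγμ : γ + μ ≠ 0) (hρμ : ρ + μ ≠ 0)
    (hI : (γ + μ) * I = ω * κ * W + μ * (1 - S))
    (hS : β * (μ + ρ) * S = (γ + μ) * (ρ + μ - ν * β * ξ * W)) :
    I = μ * (1 / (γ + μ) - 1 / β) + (ω * κ / (γ + μ) + μ * ν * ξ / (ρ + μ)) * W := by
  field_simp
  linear_combination β * (ρ + μ) * hI - μ * hS

end SIRWJS

open SIRWJS in
theorem sirwjs_equilibrium_I_J_formulas_general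
    (β ξ μ γ ρ κ ν ω : ℝ)
    (hβ : 0 < β) (hμ : 0 < μ) (hγ : 0 < γ) (hρ : 0 < ρ)
    (S I W J : ℝ)
    (hJ0 : 0 < J)
    (hden : ρ + μ - ν * β * ξ * W ≠ 0)
    (e1 : -β * (I + ξ * J) * S + ω * κ * W + μ * (1 - S) = 0)
    (e2 : β * (I + ξ * J) * S - (γ + μ) * I = 0)
    (e4 : ν * β * (I + ξ * J) * W - (μ + ρ) * J = 0) :
    I = μ * (1 / (γ + μ) - 1 / β) + (ω * κ / (γ + μ) + μ * ν * ξ / (ρ + μ)) * W ∧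
    J = ν * β * I * W / (ρ + μ - ν * β * ξ * W) :=
  ⟨I_eq_of_mul_S_eq hβ.ne' (by positivity) (by positivity) (mul_I_eq e1 e2)
      (mul_S_eq hJ0.ne' e2 e4),
    J_eq_div hden e4⟩

/-- At a positive equilibrium of the reduced SIRWJS system (with `ξ > 0` and
`ρ + μ - νβξW* ≠ 0`), the infectious components satisfy
`I* = μ(1/(γ+μ) - 1/β) + (ωκ/(γ+μ) + μνξ/(ρ+μ))·W*` and
`J* = νβI*W*/(ρ+μ - νβξW*)`. -/
theorem sirwjs_equilibrium_I_J_formulas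
    (β ξ μ γ ρ κ ν α ω : ℝ)
    (hβ : 0 < β) (hξ : 0 < ξ) (hμ : 0 < μ) (hγ : 0 < γ) (hρ : 0 < ρ)
    (hκ : 0 < κ) (hν : 0 < ν) (hα : 1 < α) (hω : 1 < ω)
    (S I W J : ℝ)
    (hI0 : 0 < I) (hW0 : 0 < W) (hJ0 : 0 < J)
    (hden : ρ + μ - ν * β * ξ * W ≠ 0)
    (e1 : -β * (I + ξ * J) * S + ω * κ * W + μ * (1 - S) = 0)
    (e2 : β * (I + ξ * J) * S - (γ + μ) * I = 0)
    (e3 : α * κ * (1 - S - I - W - J) - ω * κ * W - ν * β * (I + ξ * J) * W - μ * W = 0)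
    (e4 : ν * β * (I + ξ * J) * W - (μ + ρ) * J = 0) :
    I = μ * (1 / (γ + μ) - 1 / β) + (ω * κ / (γ + μ) + μ * ν * ξ / (ρ + μ)) * W ∧
    J = ν * β * I * W / (ρ + μ - ν * β * ξ * W) :=
  sirwjs_equilibrium_I_J_formulas_general β ξ μ γ ρ κ ν ω hβ hμ hγ hρ S I W J hJ0 hden e1 e2 e4
end

section
/- Let β>0, ξ>0, μ>0, γ>0, ρ>0, κ>0, ν>0, α>1, ω>1 with α+ω = αω, and let (S*, I*, W*, J*) be a solution of the equilibrium equations of the reduced SIRWJS system with I* > 0, W* > 0, J* > 0 and ρ+μ - νβξW* ≠ 0. Then W* is a root of the quadratic f(w) = A w² + B w + C, where A = νβ²[ -νξ²(γ+μ)Q₀ + ξQ₁ + (ακ(ρ+μ) - νξμ(γ+μ) - ηκ(ρ+μ))Q₂ ], B = β(ρ+μ)[ (νξ(γ+μ) - νξ(β-γ-μ))Q₀ - Q₁ - νμ(β-γ-μ)Q₂ ], C = (β-γ-μ)(ρ+μ)²Q₀, with η = α+ω, Q₀ = ακγ, Q₁ = [(γ+μ)(ηκ+μ) + ηκ²](ρ+μ),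 Q₂ = ακ+ρ+μ. -/
/-- At a positive equilibrium of the reduced SIRWJS system (with `ξ > 0`,
`α + ω = αω`, and `ρ + μ - νβξW* ≠ 0`), the component `W*` is a root of the
quadratic `f(w) = A w² + B w + C` with the coefficients of the paper. -/
theorem sirwjs_equilibrium_W_quadratic
    (β ξ μ γ ρ κ ν α ω : ℝ)
    (hβ : 0 < β) (hξ : 0 < ξ) (hμ : 0 < μ) (hγ : 0 < γ) (hρ : 0 < ρ)
    (hκ : 0 < κ) (hν : 0 < ν) (hα : 1 < α) (hω : 1 < ω)
    (hαω : α + ω = α * ω)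
    (S I W J : ℝ)
    (hI0 : 0 < I) (hW0 : 0 < W) (hJ0 : 0 < J)
    (hden : ρ + μ - ν * β * ξ * W ≠ 0)
    (e1 : -β * (I + ξ * J) * S + ω * κ * W + μ * (1 - S) = 0)
    (e2 : β * (I + ξ * J) * S - (γ + μ) * I = 0)
    (e3 : α * κ * (1 - S - I - W - J) - ω * κ * W - ν * β * (I + ξ * J) * W - μ * W = 0)
    (e4 : ν * β * (I + ξ * J) * W - (μ + ρ) * J = 0)
    (η Q₀ Q₁ Q₂ A B C : ℝ)
    (hη : η = α + ω)
    (hQ₀ : Q₀ = α * κ * γ)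
    (hQ₁ : Q₁ = ((γ + μ) * (η * κ + μ) + η * κ ^ 2) * (ρ + μ))
    (hQ₂ : Q₂ = α * κ + ρ + μ)
    (hA : A = ν * β ^ 2 * (-ν * ξ ^ 2 * (γ + μ) * Q₀ + ξ * Q₁
      + (α * κ * (ρ + μ) - ν * ξ * μ * (γ + μ) - η * κ * (ρ + μ)) * Q₂))
    (hB : B = β * (ρ + μ) * ((ν * ξ * (γ + μ) - ν * ξ * (β - γ - μ)) * Q₀
      - Q₁ - ν * μ * (β - γ - μ) * Q₂))
    (hC : C = (β - γ - μ) * (ρ + μ) ^ 2 * Q₀) :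
    A * W ^ 2 + B * W + C = 0 := by
  have hrm : (0:ℝ) < ρ + μ := by linarith
  have hIJ : (0:ℝ) < I + ξ * J := by positivity
  have hS3 : β * (ρ + μ) * S = (γ + μ) * ((ρ + μ) - ν * β * ξ * W) := by
    have k1 : (I + ξ * J) *
        (β * (ρ + μ) * S - (γ + μ) * ((ρ + μ) - ν * β * ξ * W)) = 0 := by
      linear_combination (ρ + μ) * e2 + ξ * (γ + μ) * e4
    have h2 := (mul_eq_zero.mp k1).resolve_left (ne_of_gt hIJ)
    linarith
  have hI3 : β * (ρ + μ) * ((γ + μ) * I)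
      = β * (ρ + μ) * (ω * κ * W + μ)
        - μ * ((γ + μ) * ((ρ + μ) - ν * β * ξ * W)) := by
    linear_combination (-(β * (ρ + μ))) * e1 - (β * (ρ + μ)) * e2 - μ * hS3
  have hJ3 : (ρ + μ) * (γ + μ) * ((ρ + μ) - ν * β * ξ * W) * J
      = ν * W * (β * (ρ + μ) * (ω * κ * W + μ)
        - μ * ((γ + μ) * ((ρ + μ) - ν * β * ξ * W))) := by
    linear_combination (-(β * (ρ + μ) * S)) * e4 + (β * (ρ + μ) * ν * W) * e2
      - ((μ + ρ) * J) * hS3 + (ν * W) * hI3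
  subst hη hQ₀ hQ₂ hQ₁ hA hB hC
  have key : (ρ + μ) * (ν * β ^ 2 * (-ν * ξ ^ 2 * (γ + μ) * (α * κ * γ) + ξ * (((γ + μ) * ((α + ω) * κ + μ) + (α + ω) * κ ^ 2) * (ρ + μ))
      + (α * κ * (ρ + μ) - ν * ξ * μ * (γ + μ) - (α + ω) * κ * (ρ + μ)) * (α * κ + ρ + μ)) * W ^ 2
      + β * (ρ + μ) * ((ν * ξ * (γ + μ) - ν * ξ * (β - γ - μ)) * (α * κ * γ)
      - ((γ + μ) * ((α + ω) * κ + μ) + (α + ω) * κ ^ 2) * (ρ + μ) - ν * μ * (β - γ - μ) * (α * κ + ρ + μ)) * W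
      + (β - γ - μ) * (ρ + μ) ^ 2 * (α * κ * γ)) = 0 := by
    linear_combination
      ((ρ + μ) * β * (ρ + μ) * (γ + μ) * ((ρ + μ) - ν * β * ξ * W)) * e3
      + ((ρ + μ) * β * (ρ + μ) * (γ + μ) * ((ρ + μ) - ν * β * ξ * W)) * e4
      + (α * κ * (ρ + μ) * (γ + μ) * ((ρ + μ) - ν * β * ξ * W)) * hS3
      + (α * κ * (ρ + μ) * ((ρ + μ) - ν * β * ξ * W)) * hI3
      + ((α * κ + ρ + μ) * β * (ρ + μ)) * hJ3
      - (β * κ ^ 2 * W * (ρ + μ) ^ 2 * ((ρ + μ) - ν * β * ξ * W)) * hαω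
  have := (mul_eq_zero.mp key).resolve_left (ne_of_gt hrm)
  linarith
end

section
/- Let β>0, ξ>0, μ>0, γ>0, ρ>0, κ>0, ν>0, α>1, ω>1 with α+ω = αω, and let f(w) = A w² + B w + C be the equilibrium quadratic of the SIRWJS system. Then at W̄ = (ρ+μ)/(νβξ) one has f(W̄) = -[(ρ+μ)²(μνβξ + (η-α)κ(ρ+μ))/(νξ²)]·Q₂, and in particular f(W̄) < 0. -/
/-- Value of the equilibrium quadratic at the upper feasibility bound
`W̄ = (ρ+μ)/(νβξ)`: one has
`f(W̄) = -[(ρ+μ)²(μνβξ + (η-α)κ(ρ+μ))/(νξ²)]·Q₂ < 0`. -/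
theorem sirwjs_quadratic_at_Wupper
    (β ξ μ γ ρ κ ν α ω : ℝ)
    (hβ : 0 < β) (hξ : 0 < ξ) (hμ : 0 < μ) (hγ : 0 < γ) (hρ : 0 < ρ)
    (hκ : 0 < κ) (hν : 0 < ν) (hα : 1 < α) (hω : 1 < ω)
    (hαω : α + ω = α * ω)
    (η Q₀ Q₁ Q₂ A B C Wup : ℝ)
    (hη : η = α + ω)
    (hQ₀ : Q₀ = α * κ * γ)
    (hQ₁ : Q₁ = ((γ + μ) * (η * κ + μ) + η * κ ^ 2) * (ρ + μ))
    (hQ₂ : Q₂ = α * κ + ρ + μ)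
    (hA : A = ν * β ^ 2 * (-ν * ξ ^ 2 * (γ + μ) * Q₀ + ξ * Q₁
      + (α * κ * (ρ + μ) - ν * ξ * μ * (γ + μ) - η * κ * (ρ + μ)) * Q₂))
    (hB : B = β * (ρ + μ) * ((ν * ξ * (γ + μ) - ν * ξ * (β - γ - μ)) * Q₀
      - Q₁ - ν * μ * (β - γ - μ) * Q₂))
    (hC : C = (β - γ - μ) * (ρ + μ) ^ 2 * Q₀)
    (hWup : Wup = (ρ + μ) / (ν * β * ξ)) :
    A * Wup ^ 2 + B * Wup + C =
      -((ρ + μ) ^ 2 * (μ * ν * β * ξ + (η - α) * κ * (ρ + μ)) / (ν * ξ ^ 2)) * Q₂ ∧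
    A * Wup ^ 2 + B * Wup + C < 0 := by
  have hηα : η - α = ω := by rw [hη]; ring
  have heq : A * Wup ^ 2 + B * Wup + C =
      -((ρ + μ) ^ 2 * (μ * ν * β * ξ + (η - α) * κ * (ρ + μ)) / (ν * ξ ^ 2)) * Q₂ := by
    subst hQ₀ hQ₁ hQ₂ hA hB hC hWup
    field_simp
    ring
  refine ⟨heq, heq ▸ ?_⟩
  rw [hηα]
  have h1 : 0 < (ρ + μ) ^ 2 * (μ * ν * β * ξ + ω * κ * (ρ + μ)) / (ν * ξ ^ 2) := by
    positivity
  have h2 : 0 < Q₂ := by rw [hQ₂]; positivity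
  nlinarith [mul_pos h1 h2]
end

section
/- Let β>0, ξ>0, μ>0, γ>0, ρ>0, κ>0, ν>0, α>1, ω>1 with α+ω = αω, and let f(w) = A w² + B w + C be the equilibrium quadratic of the SIRWJS system. Then at W̲ = μ(-β+γ+μ)(ρ+μ)/(β(μνξ(γ+μ) + ωκ(ρ+μ))) one has f(W̲) = (β-γ-μ)(ρ+μ)²(ωκ(ρ+μ)Q₀ + μQ₁)(μνβξ + ωκ(ρ+μ)) / (μνξ(γ+μ) + ωκ(ρ+μ))². In particular, if β < γ+μ then f(W̲) < 0. -/
/-- Value of the equilibrium quadratic at the lower feasibility bound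
`W̲ = μ(-β+γ+μ)(ρ+μ)/(β(μνξ(γ+μ) + ωκ(ρ+μ)))`; in particular `f(W̲) < 0`
whenever `β < γ + μ`. -/
theorem sirwjs_quadratic_at_Wlower
    (β ξ μ γ ρ κ ν α ω : ℝ)
    (hβ : 0 < β) (hξ : 0 < ξ) (hμ : 0 < μ) (hγ : 0 < γ) (hρ : 0 < ρ)
    (hκ : 0 < κ) (hν : 0 < ν) (hα : 1 < α) (hω : 1 < ω)
    (hαω : α + ω = α * ω)
    (η Q₀ Q₁ Q₂ A B C Wlow : ℝ)
    (hη : η = α + ω)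
    (hQ₀ : Q₀ = α * κ * γ)
    (hQ₁ : Q₁ = ((γ + μ) * (η * κ + μ) + η * κ ^ 2) * (ρ + μ))
    (hQ₂ : Q₂ = α * κ + ρ + μ)
    (hA : A = ν * β ^ 2 * (-ν * ξ ^ 2 * (γ + μ) * Q₀ + ξ * Q₁
      + (α * κ * (ρ + μ) - ν * ξ * μ * (γ + μ) - η * κ * (ρ + μ)) * Q₂))
    (hB : B = β * (ρ + μ) * ((ν * ξ * (γ + μ) - ν * ξ * (β - γ - μ)) * Q₀
      - Q₁ - ν * μ * (β - γ - μ) * Q₂))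
    (hC : C = (β - γ - μ) * (ρ + μ) ^ 2 * Q₀)
    (hWlow : Wlow = μ * (-β + γ + μ) * (ρ + μ)
      / (β * (μ * ν * ξ * (γ + μ) + ω * κ * (ρ + μ)))) :
    A * Wlow ^ 2 + B * Wlow + C =
      (β - γ - μ) * (ρ + μ) ^ 2 * (ω * κ * (ρ + μ) * Q₀ + μ * Q₁)
        * (μ * ν * β * ξ + ω * κ * (ρ + μ))
        / (μ * ν * ξ * (γ + μ) + ω * κ * (ρ + μ)) ^ 2 ∧
    (β < γ + μ → A * Wlow ^ 2 + B * Wlow + C < 0) := by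
  have hα0 : 0 < α := lt_trans one_pos hα
  have hω0 : 0 < ω := lt_trans one_pos hω
  have heq : A * Wlow ^ 2 + B * Wlow + C =
      (β - γ - μ) * (ρ + μ) ^ 2 * (ω * κ * (ρ + μ) * Q₀ + μ * Q₁)
        * (μ * ν * β * ξ + ω * κ * (ρ + μ))
        / (μ * ν * ξ * (γ + μ) + ω * κ * (ρ + μ)) ^ 2 := by
    subst hη hQ₀ hQ₁ hQ₂ hA hB hC hWlow
    field_simp
    ring
  refine ⟨heq, fun hlt => ?_⟩
  rw [heq]
  apply div_neg_of_neg_of_pos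
  · have hX : 0 < (ρ + μ) ^ 2 * (ω * κ * (ρ + μ) * Q₀ + μ * Q₁)
        * (μ * ν * β * ξ + ω * κ * (ρ + μ)) := by
      have hη0 : 0 < η := by rw [hη]; positivity
      rw [hQ₀, hQ₁]; positivity
    have hneg : β - γ - μ < 0 := by linarith
    calc (β - γ - μ) * (ρ + μ) ^ 2 * (ω * κ * (ρ + μ) * Q₀ + μ * Q₁)
          * (μ * ν * β * ξ + ω * κ * (ρ + μ))
        = (β - γ - μ) * ((ρ + μ) ^ 2 * (ω * κ * (ρ + μ) * Q₀ + μ * Q₁)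
          * (μ * ν * β * ξ + ω * κ * (ρ + μ))) := by ring
      _ < 0 := mul_neg_of_neg_of_pos hneg hX
  · positivity
end

section
/- Fix ξ>0, μ>0, γ>0, ρ>0, κ>0, ν>0, α>1, ω>1 with α+ω = αω, and define Θ = νξ(γ+μ)Q₀ - Q₁, where Q₀ = ακγ and Q₁ = [(γ+μ)(ηκ+μ) + ηκ²](ρ+μ), η = α+ω. If Θ > 0, then there exists β̃ with 0 < β̃ < γ+μ such that for every β ∈ (β̃, γ+μ) the reduced SIRWJS system has, besides the disease free equilibrium, exactly two epidemiologically feasible equilibria, and for β < β̃ the disease free equilibrium is the only epidemiologically feasible equilibrium. If Θ ≤ 0, then for every β with 0 < β < γ+μ (i.e. R₀ < 1) the disease free equilibrium is the only epidemiologically feasible equilibrium. -/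
/-!
Write `Λ = β (I + ξ J)` for the force of infection. An equilibrium with `Λ = 0` is the disease free
one. For fixed `Λ > 0` the equilibrium equations are linear in `(S, I, W, J)`; solving them and
substituting into the `W`-equation leaves `A Λ² + (B₀ - B₁ β) Λ + C (γ + μ - β) = 0`, and its
positive roots correspond one-to-one to the endemic equilibria, all of which are feasible when
`β ≤ γ + μ`. For `β < γ + μ` the constant term is positive, so there are positive roots iff
`B₀ - B₁ β < 0` and the discriminant is nonnegative. Since `B₁ (γ + μ) - B₀ = Θ`, for `Θ ≤ 0` there
are none. For `Θ > 0` the discriminant, a convex quadratic in `β` equal to `Θ²` at `β = γ + μ`, has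
its larger root `β̃` in `(B₀ / B₁, γ + μ)`, and `β̃` is the threshold.
-/

/-- The equilibrium equations of the reduced SIRWJS system. -/
def sirwjsEquilibrium (β ξ μ γ ρ κ ν α ω : ℝ) (p : ℝ × ℝ × ℝ × ℝ) : Prop :=
  -β * (p.2.1 + ξ * p.2.2.2) * p.1 + ω * κ * p.2.2.1 + μ * (1 - p.1) = 0 ∧
  β * (p.2.1 + ξ * p.2.2.2) * p.1 - (γ + μ) * p.2.1 = 0 ∧
  α * κ * (1 - p.1 - p.2.1 - p.2.2.1 - p.2.2.2) - ω * κ * p.2.2.1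
    - ν * β * (p.2.1 + ξ * p.2.2.2) * p.2.2.1 - μ * p.2.2.1 = 0 ∧
  ν * β * (p.2.1 + ξ * p.2.2.2) * p.2.2.1 - (μ + ρ) * p.2.2.2 = 0

/-- Membership in the feasible region `D`. -/
def sirwjsFeasible (p : ℝ × ℝ × ℝ × ℝ) : Prop :=
  0 ≤ p.1 ∧ 0 ≤ p.2.1 ∧ 0 ≤ p.2.2.1 ∧ 0 ≤ p.2.2.2 ∧
  p.1 + p.2.1 + p.2.2.1 + p.2.2.2 ≤ 1

section Quadratic

variable {a b c : ℝ}

theorem quadratic_ne_zero_of_nonneg_or_discrim_neg (ha : 0 < a) (hc : 0 < c)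
    (h : 0 ≤ b ∨ discrim a b c < 0) {x : ℝ} (hx : 0 < x) : a * (x * x) + b * x + c ≠ 0 := by
  rcases h with hb | hd
  · positivity
  · exact quadratic_ne_zero_of_discrim_ne_sq (fun s hs => (sq_nonneg s).not_gt (hs ▸ hd)) x

theorem exists_two_pos_roots_of_discrim_pos (ha : 0 < a) (hb : b < 0) (hc : 0 < c)
    (hd : 0 < discrim a b c) :
    ∃ x y : ℝ, 0 < x ∧ 0 < y ∧ x ≠ y ∧
      ∀ z, a * (z * z) + b * z + c = 0 ↔ z = x ∨ z = y := by
  set d := √(discrim a b c)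
  have hdd : discrim a b c = d * d := (Real.mul_self_sqrt hd.le).symm
  have hd0 : 0 < d := Real.sqrt_pos.2 hd
  have hdb : d < -b := by
    rw [discrim] at hdd
    nlinarith [mul_pos ha hc]
  refine ⟨(-b + d) / (2 * a), (-b - d) / (2 * a), div_pos (by linarith) (by positivity),
    div_pos (by linarith) (by positivity), ?_, quadratic_eq_zero_iff ha.ne' hdd⟩
  rw [Ne, div_left_inj' (by positivity)]
  linarith

end Quadratic

/-- `βc` is the larger root of the discriminant of `a x² + (b₀ - b₁ β) x + c (G - β)`, a quadratic
in `β`: with `R = √(a c (a c + b₁ (b₁ G - b₀)))` it equals `(β - βc) (b₁² (β - βc) + 4 R)`. -/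
theorem exists_discrim_sign_threshold {a b₀ b₁ c G : ℝ} (ha : 0 < a) (hb₀ : 0 < b₀) (hb₁ : 0 < b₁)
    (hc : 0 < c) (hG : b₀ < b₁ * G) :
    ∃ βc, 0 < βc ∧ βc < G ∧
      (∀ β, βc < β → b₀ - b₁ * β < 0 ∧ 0 < discrim a (b₀ - b₁ * β) (c * (G - β))) ∧
      (∀ β, β < βc → 0 ≤ b₀ - b₁ * β ∨ discrim a (b₀ - b₁ * β) (c * (G - β)) < 0) := by
  have hΘ : 0 < b₁ * (b₁ * G - b₀) := mul_pos hb₁ (by linarith)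
  have hac : 0 < a * c := mul_pos ha hc
  set R := √(a * c * (a * c + b₁ * (b₁ * G - b₀)))
  have hR : R * R = a * c * (a * c + b₁ * (b₁ * G - b₀)) := Real.mul_self_sqrt (by positivity)
  have hR0 : 0 ≤ R := Real.sqrt_nonneg _
  have hR_gt : a * c < R := by nlinarith
  have hR_lt : 2 * R < b₁ * (b₁ * G - b₀) + 2 * (a * c) := by nlinarith
  obtain ⟨βc, hβc⟩ : ∃ βc, b₁ ^ 2 * βc = b₀ * b₁ - 2 * (a * c) + 2 * R :=
    ⟨_, mul_div_cancel₀ _ (by positivity)⟩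
  have hdisc : ∀ β, b₁ ^ 2 * discrim a (b₀ - b₁ * β) (c * (G - β))
      = b₁ ^ 2 * (β - βc) * (b₁ ^ 2 * (β - βc) + 4 * R) := by
    intro β
    rw [discrim]
    linear_combination
      (2 * b₁ ^ 2 * β - b₁ ^ 2 * βc - (b₀ * b₁ - 2 * (a * c) + 2 * R) + 4 * R) * hβc + 4 * hR
  have hb₁2 : 0 < b₁ ^ 2 := by positivity
  refine ⟨βc, pos_of_mul_pos_right (by nlinarith) hb₁2.le,
    lt_of_mul_lt_mul_left (by nlinarith) hb₁2.le, fun β hβ => ⟨?_, ?_⟩, fun β hβ => ?_⟩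
  · nlinarith
  · refine pos_of_mul_pos_right ?_ hb₁2.le
    rw [hdisc]
    have : 0 < β - βc := by linarith
    positivity
  · refine (le_or_gt 0 (b₀ - b₁ * β)).imp_right fun hb => neg_of_mul_neg_right ?_ hb₁2.le
    rw [hdisc]
    refine mul_neg_of_neg_of_pos (mul_neg_of_pos_of_neg hb₁2 (by linarith)) ?_
    nlinarith

def sirwjsForce (β ξ : ℝ) (p : ℝ × ℝ × ℝ × ℝ) : ℝ := β * (p.2.1 + ξ * p.2.2.2)

section Endemic

variable (β ξ μ γ ρ κ ν α ω Λ : ℝ)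

def endemicA : ℝ := (γ + μ) * ν * (α * κ + μ + ρ)

def endemicB₀ : ℝ :=
  ((γ + μ) * ((α + ω) * κ + μ) + α * ω * κ ^ 2) * (μ + ρ) + μ * ν * (α * κ + μ + ρ) * (γ + μ)

def endemicB₁ : ℝ := ν * ξ * α * κ * γ + μ * ν * (α * κ + μ + ρ)

def endemicC : ℝ := (μ + ρ) * (α * ω * κ ^ 2 + μ * (α + ω) * κ + μ ^ 2)

def endemicPoly : ℝ :=
  endemicA μ γ ρ κ ν α * (Λ * Λ) + (endemicB₀ μ γ ρ κ ν α ω - endemicB₁ ξ μ γ ρ κ ν α * β) * Λ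
    + endemicC μ ρ κ α ω * (γ + μ - β)

/-- With `endemicS`, the solution `(S, W)` of `(Λ + μ) S = μ + ω κ W` (the `S`-equation) and
`β ((μ + ρ) S + ξ ν (γ + μ) W) = (γ + μ) (μ + ρ)` (the identity `β (I + ξ J) = Λ` after eliminating
`I` and `J` through the `I`- and `J`-equations). -/
noncomputable def endemicW : ℝ :=
  (μ + ρ) * ((γ + μ) * (Λ + μ) - β * μ) / (β * ((μ + ρ) * ω * κ + ξ * ν * (γ + μ) * (Λ + μ)))

noncomputable def endemicS : ℝ := (μ + ω * κ * endemicW β ξ μ γ ρ κ ν ω Λ) / (Λ + μ)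

noncomputable def endemicPoint : ℝ × ℝ × ℝ × ℝ :=
  (endemicS β ξ μ γ ρ κ ν ω Λ, Λ * endemicS β ξ μ γ ρ κ ν ω Λ / (γ + μ),
    endemicW β ξ μ γ ρ κ ν ω Λ, ν * Λ * endemicW β ξ μ γ ρ κ ν ω Λ / (μ + ρ))

end Endemic

section Equilibria

variable {β ξ μ γ ρ κ ν α ω Λ s i w j : ℝ}

/-- Where the endemic polynomial comes from: once `(s, w)` solves the linear system above, the
`W`-equation reduces to it. -/
theorem endemicPoly_eq_neg_residual_mul (hβ : β ≠ 0) (hγμ : γ + μ ≠ 0) (hμρ : μ + ρ ≠ 0)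
    (hi : (γ + μ) * i = Λ * s) (hj : (μ + ρ) * j = ν * Λ * w)
    (hw : w * (β * ((μ + ρ) * ω * κ + ξ * ν * (γ + μ) * (Λ + μ)))
      = (μ + ρ) * ((γ + μ) * (Λ + μ) - β * μ))
    (hsw : s * (β * (μ + ρ)) = (γ + μ) * (μ + ρ) - β * ξ * ν * (γ + μ) * w) :
    endemicPoly β ξ μ γ ρ κ ν α ω Λ
      = -((α * κ * (1 - s - i - w - j) - ω * κ * w - ν * Λ * w - μ * w)
        * (β * ((μ + ρ) * ω * κ + ξ * ν * (γ + μ) * (Λ + μ)))) := by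
  refine mul_right_cancel₀ (by positivity : (γ + μ) * (μ + ρ) * (β * (μ + ρ)) ≠ 0) ?_
  rw [endemicPoly, endemicA, endemicB₀, endemicB₁, endemicC]
  linear_combination
    ((-(α * κ * (γ + μ) * ((μ + ρ) + ν * Λ) + (γ + μ) * (μ + ρ) * (ω * κ + μ + ν * Λ)))
        * (β * (μ + ρ))
      - (-(α * κ * (μ + ρ) * ((γ + μ) + Λ))) * (β * ξ * ν * (γ + μ))) * hw
    + (-(α * κ * (μ + ρ) * ((γ + μ) + Λ)))
        * (β * ((μ + ρ) * ω * κ + ξ * ν * (γ + μ) * (Λ + μ))) * hsw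
    - (α * κ * (μ + ρ) * (β * (μ + ρ)) * (β * ((μ + ρ) * ω * κ + ξ * ν * (γ + μ) * (Λ + μ)))) * hi
    - (α * κ * (γ + μ) * (β * (μ + ρ)) * (β * ((μ + ρ) * ω * κ + ξ * ν * (γ + μ) * (Λ + μ)))) * hj

theorem sirwjsFeasible_of_sirwjsEquilibrium {p : ℝ × ℝ × ℝ × ℝ} (hμ : 0 ≤ μ) (hκ : 0 < κ)
    (hν : 0 ≤ ν) (hα : 0 < α) (hω : 0 ≤ ω) (hp : sirwjsEquilibrium β ξ μ γ ρ κ ν α ω p)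
    (hΛ : 0 ≤ sirwjsForce β ξ p) (hs : 0 ≤ p.1) (hi : 0 ≤ p.2.1) (hw : 0 ≤ p.2.2.1)
    (hj : 0 ≤ p.2.2.2) : sirwjsFeasible p := by
  refine ⟨hs, hi, hw, hj, ?_⟩
  have hrem : α * κ * (1 - p.1 - p.2.1 - p.2.2.1 - p.2.2.2)
      = (ω * κ + ν * sirwjsForce β ξ p + μ) * p.2.2.1 := by
    rw [sirwjsForce]; linear_combination hp.2.2.1
  have : 0 ≤ 1 - p.1 - p.2.1 - p.2.2.1 - p.2.2.2 :=
    (mul_nonneg_iff_of_pos_left (mul_pos hα hκ)).1 (hrem ▸ by positivity)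
  linarith

theorem eq_dfe_of_sirwjsForce_eq_zero {p : ℝ × ℝ × ℝ × ℝ} (hβ : 0 < β) (hξ : 0 < ξ) (hμ : 0 < μ)
    (hκ : 0 < κ) (hω : 0 < ω) (hp : sirwjsEquilibrium β ξ μ γ ρ κ ν α ω p)
    (hf : sirwjsFeasible p) (hΛ : sirwjsForce β ξ p = 0) : p = (1, 0, 0, 0) := by
  obtain ⟨s, i, w, j⟩ := p
  obtain ⟨hs, hi, hw, hj, hsum⟩ := hf
  dsimp only [sirwjsEquilibrium, sirwjsForce] at hp hΛ hs hi hw hj hsum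
  have hij : i + ξ * j = 0 := (mul_eq_zero.1 hΛ).resolve_left hβ.ne'
  have hj0 : j = 0 := by nlinarith
  have hi0 : i = 0 := by nlinarith
  have hdfe : ω * κ * w + μ * (1 - s) = 0 := by linear_combination hp.1 + s * hΛ
  have hw0 : w = 0 := by nlinarith [mul_pos hω hκ]
  have hs1 : s = 1 := by
    have h : μ * (1 - s) = 0 := by simpa [hw0] using hdfe
    linarith [(mul_eq_zero.1 h).resolve_left hμ.ne']
  rw [hs1, hi0, hw0, hj0]

theorem eq_endemicPoint_of_sirwjsEquilibrium {p : ℝ × ℝ × ℝ × ℝ} (hβ : 0 < β) (hξ : 0 < ξ)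
    (hμ : 0 < μ) (hγ : 0 < γ) (hρ : 0 < ρ) (hκ : 0 < κ) (hν : 0 < ν) (hω : 0 < ω)
    (hp : sirwjsEquilibrium β ξ μ γ ρ κ ν α ω p) (hΛ : 0 < sirwjsForce β ξ p) :
    p = endemicPoint β ξ μ γ ρ κ ν ω (sirwjsForce β ξ p) ∧
      endemicPoly β ξ μ γ ρ κ ν α ω (sirwjsForce β ξ p) = 0 := by
  obtain ⟨s, i, w, j⟩ := p
  dsimp only [sirwjsEquilibrium, sirwjsForce] at hp hΛ ⊢
  generalize hΛ_def : β * (i + ξ * j) = Λ at hΛ ⊢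
  obtain ⟨h₁, h₂, h₃, h₄⟩ := hp
  have hs : (Λ + μ) * s = μ + ω * κ * w := by linear_combination -h₁ - s * hΛ_def
  have hi : (γ + μ) * i = Λ * s := by linear_combination -h₂ + s * hΛ_def
  have hj : (μ + ρ) * j = ν * Λ * w := by linear_combination -h₄ + ν * w * hΛ_def
  have hsw : s * (β * (μ + ρ)) = (γ + μ) * (μ + ρ) - β * ξ * ν * (γ + μ) * w :=
    mul_left_cancel₀ hΛ.ne' (by
      linear_combination (-(β * (μ + ρ))) * hi - (β * ξ * (γ + μ)) * hj
        + (γ + μ) * (μ + ρ) * hΛ_def)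
  have hw : w * (β * ((μ + ρ) * ω * κ + ξ * ν * (γ + μ) * (Λ + μ)))
      = (μ + ρ) * ((γ + μ) * (Λ + μ) - β * μ) := by
    linear_combination (-(β * (μ + ρ))) * hs + (Λ + μ) * hsw
  have hw_eq : w = endemicW β ξ μ γ ρ κ ν ω Λ := by
    rw [endemicW, eq_div_iff (by positivity)]; exact hw
  have hs_eq : s = endemicS β ξ μ γ ρ κ ν ω Λ := by
    rw [endemicS, ← hw_eq, eq_div_iff (by positivity)]; linear_combination hs
  refine ⟨?_, ?_⟩
  · rw [endemicPoint, ← hw_eq, ← hs_eq, Prod.mk.injEq, Prod.mk.injEq, Prod.mk.injEq]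
    refine ⟨rfl, ?_, rfl, ?_⟩ <;> rw [eq_div_iff (by positivity)] <;> linarith
  · rw [endemicPoly_eq_neg_residual_mul hβ.ne' (by positivity) (by positivity) hi hj hw hsw]
    linear_combination -(β * ((μ + ρ) * ω * κ + ξ * ν * (γ + μ) * (Λ + μ))) * (h₃ + ν * w * hΛ_def)

theorem sirwjsEquilibrium_endemicPoint (hβ : 0 < β) (hξ : 0 < ξ) (hμ : 0 < μ) (hγ : 0 < γ)
    (hρ : 0 < ρ) (hκ : 0 < κ) (hν : 0 < ν) (hω : 0 < ω) (hΛ : 0 < Λ)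
    (hP : endemicPoly β ξ μ γ ρ κ ν α ω Λ = 0) :
    sirwjsEquilibrium β ξ μ γ ρ κ ν α ω (endemicPoint β ξ μ γ ρ κ ν ω Λ) ∧
      sirwjsForce β ξ (endemicPoint β ξ μ γ ρ κ ν ω Λ) = Λ := by
  unfold endemicPoint sirwjsEquilibrium sirwjsForce
  dsimp only
  set w := endemicW β ξ μ γ ρ κ ν ω Λ
  set s := endemicS β ξ μ γ ρ κ ν ω Λ
  have hdet : 0 < β * ((μ + ρ) * ω * κ + ξ * ν * (γ + μ) * (Λ + μ)) := by positivity
  have hw : w * (β * ((μ + ρ) * ω * κ + ξ * ν * (γ + μ) * (Λ + μ)))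
      = (μ + ρ) * ((γ + μ) * (Λ + μ) - β * μ) := div_mul_cancel₀ _ hdet.ne'
  have hs : (Λ + μ) * s = μ + ω * κ * w := mul_div_cancel₀ _ (by positivity)
  have hsw : s * (β * (μ + ρ)) = (γ + μ) * (μ + ρ) - β * ξ * ν * (γ + μ) * w :=
    mul_left_cancel₀ (by positivity : Λ + μ ≠ 0) (by
      linear_combination (β * (μ + ρ)) * hs + hw)
  have hi : (γ + μ) * (Λ * s / (γ + μ)) = Λ * s := mul_div_cancel₀ _ (by positivity)
  have hj : (μ + ρ) * (ν * Λ * w / (μ + ρ)) = ν * Λ * w := mul_div_cancel₀ _ (by positivity)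
  have hF : β * (Λ * s / (γ + μ) + ξ * (ν * Λ * w / (μ + ρ))) = Λ :=
    mul_left_cancel₀ (by positivity : (γ + μ) * (μ + ρ) ≠ 0) (by
      linear_combination β * (μ + ρ) * hi + β * ξ * (γ + μ) * hj + Λ * hsw)
  rw [endemicPoly_eq_neg_residual_mul hβ.ne' (by positivity) (by positivity) hi hj hw hsw,
    neg_eq_zero, mul_eq_zero, or_iff_left hdet.ne'] at hP
  refine ⟨⟨?_, ?_, ?_, ?_⟩, hF⟩
  · linear_combination (-s) * hF - hs
  · linear_combination s * hF - hi
  · linear_combination hP - ν * w * hF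
  · linear_combination ν * w * hF - hj

theorem sirwjsFeasible_endemicPoint (hβ : 0 < β) (hβγμ : β ≤ γ + μ) (hξ : 0 < ξ) (hμ : 0 < μ)
    (hγ : 0 < γ) (hρ : 0 < ρ) (hκ : 0 < κ) (hν : 0 < ν) (hα : 0 < α) (hω : 0 < ω) (hΛ : 0 < Λ)
    (hP : endemicPoly β ξ μ γ ρ κ ν α ω Λ = 0) :
    sirwjsFeasible (endemicPoint β ξ μ γ ρ κ ν ω Λ) := by
  obtain ⟨heq, hF⟩ := sirwjsEquilibrium_endemicPoint hβ hξ hμ hγ hρ hκ hν hω hΛ hP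
  have hw : 0 < endemicW β ξ μ γ ρ κ ν ω Λ :=
    div_pos (mul_pos (by positivity) (by nlinarith)) (by positivity)
  have hs : 0 < endemicS β ξ μ γ ρ κ ν ω Λ := by unfold endemicS; positivity
  exact sirwjsFeasible_of_sirwjsEquilibrium hμ.le hκ hν.le hα hω.le heq (by rw [hF]; exact hΛ.le) hs.le
    (by unfold endemicPoint; positivity) hw.le (by unfold endemicPoint; positivity)

theorem eq_dfe_or_eq_endemicPoint {p : ℝ × ℝ × ℝ × ℝ} (hβ : 0 < β) (hξ : 0 < ξ) (hμ : 0 < μ)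
    (hγ : 0 < γ) (hρ : 0 < ρ) (hκ : 0 < κ) (hν : 0 < ν) (hω : 0 < ω)
    (hp : sirwjsEquilibrium β ξ μ γ ρ κ ν α ω p) (hf : sirwjsFeasible p) :
    p = (1, 0, 0, 0) ∨ ∃ Λ, 0 < Λ ∧ endemicPoly β ξ μ γ ρ κ ν α ω Λ = 0 ∧
      p = endemicPoint β ξ μ γ ρ κ ν ω Λ := by
  have hF : 0 ≤ sirwjsForce β ξ p := by
    have := hf.2.1; have := hf.2.2.2.1; unfold sirwjsForce; positivity
  rcases hF.eq_or_lt with hF | hF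
  · exact Or.inl (eq_dfe_of_sirwjsForce_eq_zero hβ hξ hμ hκ hω hp hf hF.symm)
  · obtain ⟨hpt, hP⟩ := eq_endemicPoint_of_sirwjsEquilibrium hβ hξ hμ hγ hρ hκ hν hω hp hF
    exact Or.inr ⟨_, hF, hP, hpt⟩

theorem eq_dfe_of_forall_endemicPoly_ne_zero {p : ℝ × ℝ × ℝ × ℝ} (hβ : 0 < β) (hξ : 0 < ξ)
    (hμ : 0 < μ) (hγ : 0 < γ) (hρ : 0 < ρ) (hκ : 0 < κ) (hν : 0 < ν) (hω : 0 < ω)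
    (hP : ∀ Λ, 0 < Λ → endemicPoly β ξ μ γ ρ κ ν α ω Λ ≠ 0)
    (hp : sirwjsEquilibrium β ξ μ γ ρ κ ν α ω p) (hf : sirwjsFeasible p) : p = (1, 0, 0, 0) :=
  (eq_dfe_or_eq_endemicPoint hβ hξ hμ hγ hρ hκ hν hω hp hf).resolve_right
    fun ⟨Λ, hΛ, hPΛ, _⟩ => hP Λ hΛ hPΛ

theorem exists_two_endemic_equilibria (hβ : 0 < β) (hβγμ : β ≤ γ + μ) (hξ : 0 < ξ) (hμ : 0 < μ)
    (hγ : 0 < γ) (hρ : 0 < ρ) (hκ : 0 < κ) (hν : 0 < ν) (hα : 0 < α) (hω : 0 < ω) {x y : ℝ}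
    (hx : 0 < x) (hy : 0 < y) (hxy : x ≠ y)
    (hroots : ∀ Λ, endemicPoly β ξ μ γ ρ κ ν α ω Λ = 0 ↔ Λ = x ∨ Λ = y) :
    ∃ p q : ℝ × ℝ × ℝ × ℝ, p ≠ q ∧ p ≠ (1, 0, 0, 0) ∧ q ≠ (1, 0, 0, 0) ∧
      sirwjsEquilibrium β ξ μ γ ρ κ ν α ω p ∧ sirwjsFeasible p ∧
      sirwjsEquilibrium β ξ μ γ ρ κ ν α ω q ∧ sirwjsFeasible q ∧
      (∀ r : ℝ × ℝ × ℝ × ℝ, sirwjsEquilibrium β ξ μ γ ρ κ ν α ω r → sirwjsFeasible r →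
        r = (1, 0, 0, 0) ∨ r = p ∨ r = q) := by
  have hPx := (hroots x).2 (Or.inl rfl)
  have hPy := (hroots y).2 (Or.inr rfl)
  obtain ⟨hpx, hFx⟩ := sirwjsEquilibrium_endemicPoint hβ hξ hμ hγ hρ hκ hν hω hx hPx
  obtain ⟨hpy, hFy⟩ := sirwjsEquilibrium_endemicPoint hβ hξ hμ hγ hρ hκ hν hω hy hPy
  have hF₀ : sirwjsForce β ξ (1, 0, 0, 0) = 0 := by simp [sirwjsForce]
  refine ⟨endemicPoint β ξ μ γ ρ κ ν ω x, endemicPoint β ξ μ γ ρ κ ν ω y,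
    fun h => hxy (by rw [← hFx, ← hFy, h]), fun h => hx.ne' (by rw [← hFx, h, hF₀]),
    fun h => hy.ne' (by rw [← hFy, h, hF₀]), hpx,
    sirwjsFeasible_endemicPoint hβ hβγμ hξ hμ hγ hρ hκ hν hα hω hx hPx, hpy,
    sirwjsFeasible_endemicPoint hβ hβγμ hξ hμ hγ hρ hκ hν hα hω hy hPy, fun r hr hfr => ?_⟩
  rcases eq_dfe_or_eq_endemicPoint hβ hξ hμ hγ hρ hκ hν hω hr hfr with h | ⟨Λ, hΛ, hPΛ, rfl⟩
  · exact Or.inl h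
  · rcases (hroots Λ).1 hPΛ with rfl | rfl
    exacts [Or.inr (Or.inl rfl), Or.inr (Or.inr rfl)]

end Equilibria

/-- Theorem 3.1 of the paper: if `Θ = νξ(γ+μ)Q₀ - Q₁ > 0`, there is a critical
`β̃ ∈ (0, γ+μ)` such that for `β ∈ (β̃, γ+μ)` the reduced SIRWJS system has
exactly two epidemiologically feasible equilibria besides the DFE, and for
`β < β̃` only the DFE; if `Θ ≤ 0`, then for all `β < γ+μ` (i.e. `R₀ < 1`)
the DFE is the only epidemiologically feasible equilibrium. -/
theorem sirwjs_backward_bifurcation_equilibria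
    (ξ μ γ ρ κ ν α ω : ℝ)
    (hξ : 0 < ξ) (hμ : 0 < μ) (hγ : 0 < γ) (hρ : 0 < ρ)
    (hκ : 0 < κ) (hν : 0 < ν) (hα : 1 < α) (hω : 1 < ω)
    (hαω : α + ω = α * ω)
    (η Q₀ Q₁ Θ : ℝ)
    (hη : η = α + ω)
    (hQ₀ : Q₀ = α * κ * γ)
    (hQ₁ : Q₁ = ((γ + μ) * (η * κ + μ) + η * κ ^ 2) * (ρ + μ))
    (hΘ : Θ = ν * ξ * (γ + μ) * Q₀ - Q₁) :
    (0 < Θ → ∃ βc : ℝ, 0 < βc ∧ βc < γ + μ ∧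
      (∀ β : ℝ, βc < β → β < γ + μ →
        ∃ p q : ℝ × ℝ × ℝ × ℝ, p ≠ q ∧ p ≠ (1, 0, 0, 0) ∧ q ≠ (1, 0, 0, 0) ∧
          sirwjsEquilibrium β ξ μ γ ρ κ ν α ω p ∧ sirwjsFeasible p ∧
          sirwjsEquilibrium β ξ μ γ ρ κ ν α ω q ∧ sirwjsFeasible q ∧
          (∀ r : ℝ × ℝ × ℝ × ℝ,
            sirwjsEquilibrium β ξ μ γ ρ κ ν α ω r → sirwjsFeasible r →
            r = (1, 0, 0, 0) ∨ r = p ∨ r = q)) ∧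
      (∀ β : ℝ, 0 < β → β < βc →
        ∀ p : ℝ × ℝ × ℝ × ℝ,
          sirwjsEquilibrium β ξ μ γ ρ κ ν α ω p → sirwjsFeasible p →
          p = (1, 0, 0, 0))) ∧
    (Θ ≤ 0 → ∀ β : ℝ, 0 < β → β < γ + μ →
      ∀ p : ℝ × ℝ × ℝ × ℝ,
        sirwjsEquilibrium β ξ μ γ ρ κ ν α ω p → sirwjsFeasible p →
        p = (1, 0, 0, 0)) := by
  have hα₀ : 0 < α := by linarith
  have hω₀ : 0 < ω := by linarith
  have hA : 0 < endemicA μ γ ρ κ ν α := by unfold endemicA; positivity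
  have hB₀ : 0 < endemicB₀ μ γ ρ κ ν α ω := by unfold endemicB₀; positivity
  have hB₁ : 0 < endemicB₁ ξ μ γ ρ κ ν α := by unfold endemicB₁; positivity
  have hC : 0 < endemicC μ ρ κ α ω := by unfold endemicC; positivity
  have hΘB : Θ = endemicB₁ ξ μ γ ρ κ ν α * (γ + μ) - endemicB₀ μ γ ρ κ ν α ω := by
    rw [hΘ, hQ₁, hQ₀, hη, endemicB₁, endemicB₀]
    linear_combination (-(μ + ρ) * κ ^ 2) * hαω
  refine ⟨fun hΘpos => ?_, fun hΘnonpos β hβ hβγμ p hp hf => ?_⟩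
  · obtain ⟨βc, hβc, hβcγμ, habove, hbelow⟩ :=
      exists_discrim_sign_threshold (G := γ + μ) hA hB₀ hB₁ hC (by linarith)
    refine ⟨βc, hβc, hβcγμ, fun β hβcβ hβγμ => ?_, fun β hβ hββc p hp hf => ?_⟩
    · obtain ⟨hb, hd⟩ := habove β hβcβ
      obtain ⟨x, y, hx, hy, hxy, hroots⟩ :=
        exists_two_pos_roots_of_discrim_pos hA hb (mul_pos hC (by linarith)) hd
      exact exists_two_endemic_equilibria (by linarith) hβγμ.le hξ hμ hγ hρ hκ hν hα₀ hω₀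
        hx hy hxy hroots
    · exact eq_dfe_of_forall_endemicPoly_ne_zero hβ hξ hμ hγ hρ hκ hν hω₀
        (fun Λ => quadratic_ne_zero_of_nonneg_or_discrim_neg hA
          (mul_pos hC (by linarith)) (hbelow β hββc)) hp hf
  · have hb : 0 ≤ endemicB₀ μ γ ρ κ ν α ω - endemicB₁ ξ μ γ ρ κ ν α * β := by
      nlinarith [mul_pos hB₁ (sub_pos.2 hβγμ)]
    exact eq_dfe_of_forall_endemicPoly_ne_zero hβ hξ hμ hγ hρ hκ hν hω₀
      (fun Λ => quadratic_ne_zero_of_nonneg_or_discrim_neg hA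
        (mul_pos hC (by linarith)) (Or.inl hb)) hp hf
end

section
/- Let ξ>0, μ>0, γ>0, ρ>0, κ>0, ν>0, α>1, ω>1 with α+ω = αω. Then there exist real constants c₁, c₀ (independent of β) such that for all β the discriminant of the equilibrium quadratic of the SIRWJS system satisfies B(β)² - 4A(β)C(β) = (ρ+μ)² β² ( ν²(ξQ₀ + μQ₂)² β² + c₁ β + c₀ ); in particular, Δ(β)/((ρ+μ)²β²) is a quadratic polynomial in β with positive leading coefficient ν²(ξQ₀ + μQ₂)², and hence Δ has at most two zeros in (0, γ+μ]. -/
/-- The discriminant of the equilibrium quadratic of the SIRWJS system has the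
form `Δ(β) = (ρ+μ)²β²·q(β)`, where `q` is a quadratic polynomial in `β` with
positive leading coefficient `ν²(ξQ₀ + μQ₂)²`; hence `Δ` has at most two zeros
in `(0, γ+μ]`. -/
theorem sirwjs_discriminant_structure
    (ξ μ γ ρ κ ν α ω : ℝ)
    (hξ : 0 < ξ) (hμ : 0 < μ) (hγ : 0 < γ) (hρ : 0 < ρ)
    (hκ : 0 < κ) (hν : 0 < ν) (hα : 1 < α) (hω : 1 < ω)
    (hαω : α + ω = α * ω)
    (η Q₀ Q₁ Q₂ : ℝ) (A B C : ℝ → ℝ)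
    (hη : η = α + ω)
    (hQ₀ : Q₀ = α * κ * γ)
    (hQ₁ : Q₁ = ((γ + μ) * (η * κ + μ) + η * κ ^ 2) * (ρ + μ))
    (hQ₂ : Q₂ = α * κ + ρ + μ)
    (hA : ∀ β : ℝ, A β = ν * β ^ 2 * (-ν * ξ ^ 2 * (γ + μ) * Q₀ + ξ * Q₁
      + (α * κ * (ρ + μ) - ν * ξ * μ * (γ + μ) - η * κ * (ρ + μ)) * Q₂))
    (hB : ∀ β : ℝ, B β = β * (ρ + μ) * ((ν * ξ * (γ + μ) - ν * ξ * (β - γ - μ)) * Q₀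
      - Q₁ - ν * μ * (β - γ - μ) * Q₂))
    (hC : ∀ β : ℝ, C β = (β - γ - μ) * (ρ + μ) ^ 2 * Q₀) :
    0 < ν ^ 2 * (ξ * Q₀ + μ * Q₂) ^ 2 ∧
    ∃ c₁ c₀ : ℝ,
      (∀ β : ℝ, B β ^ 2 - 4 * A β * C β =
        (ρ + μ) ^ 2 * β ^ 2 *
          (ν ^ 2 * (ξ * Q₀ + μ * Q₂) ^ 2 * β ^ 2 + c₁ * β + c₀)) ∧
      ∃ b₁ b₂ : ℝ, ∀ β ∈ Set.Ioc 0 (γ + μ),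
        B β ^ 2 - 4 * A β * C β = 0 → β = b₁ ∨ β = b₂ := by

  have hQ0pos : 0 < Q₀ := by
    rw [hQ₀]; positivity
  have hQ2pos : 0 < Q₂ := by
    rw [hQ₂]; positivity
  have hlead : 0 < ν ^ 2 * (ξ * Q₀ + μ * Q₂) ^ 2 := by positivity
  refine ⟨hlead, ?_⟩
  obtain ⟨c₁, c₀, hmain⟩ : ∃ c₁ c₀ : ℝ, ∀ β : ℝ, B β ^ 2 - 4 * A β * C β =
      (ρ + μ) ^ 2 * β ^ 2 *
        (ν ^ 2 * (ξ * Q₀ + μ * Q₂) ^ 2 * β ^ 2 + c₁ * β + c₀) := by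
    refine ⟨2 * (2 * ν * ξ * (γ + μ) * Q₀ - Q₁ + ν * μ * (γ + μ) * Q₂) *
        (-(ν * (ξ * Q₀ + μ * Q₂))) - 4 * ν * (-ν * ξ ^ 2 * (γ + μ) * Q₀ + ξ * Q₁
        + (α * κ * (ρ + μ) - ν * ξ * μ * (γ + μ) - η * κ * (ρ + μ)) * Q₂) * Q₀,
      (2 * ν * ξ * (γ + μ) * Q₀ - Q₁ + ν * μ * (γ + μ) * Q₂) ^ 2
        + 4 * ν * (-ν * ξ ^ 2 * (γ + μ) * Q₀ + ξ * Q₁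
        + (α * κ * (ρ + μ) - ν * ξ * μ * (γ + μ) - η * κ * (ρ + μ)) * Q₂) * (γ + μ) * Q₀,
      fun β => ?_⟩
    rw [hA β, hB β, hC β]
    ring
  refine ⟨c₁, c₀, hmain, ?_⟩
  have ha : ν ^ 2 * (ξ * Q₀ + μ * Q₂) ^ 2 ≠ 0 := ne_of_gt hlead
  have hq : ∀ β : ℝ, β ∈ Set.Ioc (0:ℝ) (γ + μ) → B β ^ 2 - 4 * A β * C β = 0 →
      ν ^ 2 * (ξ * Q₀ + μ * Q₂) ^ 2 * (β * β) + c₁ * β + c₀ = 0 := by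
    intro β hβ h0
    have hβ0 : (0:ℝ) < β := hβ.1
    have h := hmain β
    rw [h0] at h
    have hfac : (ρ + μ) ^ 2 * β ^ 2 ≠ 0 := by positivity
    rcases mul_eq_zero.mp h.symm with h' | h'
    · exact absurd h' hfac
    · nlinarith [h']
  by_cases hd : 0 ≤ discrim (ν ^ 2 * (ξ * Q₀ + μ * Q₂) ^ 2) c₁ c₀
  · have hss : discrim (ν ^ 2 * (ξ * Q₀ + μ * Q₂) ^ 2) c₁ c₀ =
        Real.sqrt (discrim (ν ^ 2 * (ξ * Q₀ + μ * Q₂) ^ 2) c₁ c₀) *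
        Real.sqrt (discrim (ν ^ 2 * (ξ * Q₀ + μ * Q₂) ^ 2) c₁ c₀) :=
      (Real.mul_self_sqrt hd).symm
    refine ⟨_, _, fun β hβ h0 => (quadratic_eq_zero_iff ha hss β).mp (hq β hβ h0)⟩
  · refine ⟨0, 0, fun β hβ h0 => absurd (hq β hβ h0) ?_⟩
    exact quadratic_ne_zero_of_discrim_ne_sq
      (fun s hcon => hd (hcon ▸ sq_nonneg s)) β
end

section
/- Let β>0, ξ≥0, μ>0, γ>0, ρ>0, κ>0, ν>0, α>1, ω>1, and let J₀ be the 4×4 real matrix [[-μ, -β, ωκ, -βξ], [0, β-(γ+μ), 0, βξ], [-ακ, -ακ, -(ακ+ωκ+μ), -ακ], [0, 0, 0, -(ρ+μ)]] (the Jacobian of the reduced SIRWJS system at the disease free equilibrium (1,0,0,0)). Then the characteristic polynomial of J₀ factors as (λ - (β-γ-μ))(λ + ακ + μ)(λ + ωκ + μ)(λ + ρ + μ); in particular the eigenvalues of J₀ are β-(γ+μ), -(ακ+μ), -(ωκ+μ), -(ρ+μ), and all eigenvalues are negative if and only if β < γ+μ (i.e. R₀ = β/(γ+μ) < 1). -/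
open Matrix

/-!
Expanding along the fourth row and then the second row (each has a single nonzero entry, on the
diagonal) reduces `det (J₀ - λ)` to `(β - (γ + μ) - λ)(-(ρ + μ) - λ)` times the `2 × 2` determinant
of the `(S, W)` block, which is `(λ + μ)² + (λ + μ)(ακ + ωκ) + αωκ² = (λ + ακ + μ)(λ + ωκ + μ)`.
Three of the four eigenvalues are therefore negative for all admissible parameters, and the sign
of the spectrum is decided by `β - (γ + μ)`.
-/

theorem det_fin_four_of_sparse_rows {R : Type*} [CommRing R] (a b c d f h i j k l p : R) :
    !![a, b, c, d; 0, f, 0, h; i, j, k, l; 0, 0, 0, p].det = f * p * (a * k - c * i) := by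
  simp [det_succ_row_zero, Fin.sum_univ_succ, Fin.succAbove, Fin.castSucc, Fin.castAdd,
    Fin.castLE]
  ring

theorem fin_four_sub_smul_one {R : Type*} [CommRing R] (a b c d e f g h i j k l m n o p x : R) :
    !![a, b, c, d; e, f, g, h; i, j, k, l; m, n, o, p] - x • (1 : Matrix (Fin 4) (Fin 4) R) =
      !![a - x, b, c, d; e, f - x, g, h; i, j, k - x, l; m, n, o, p - x] := by
  ext r s
  fin_cases r <;> fin_cases s <;> simp

def sirwjsJacobianDFE (β ξ μ γ ρ κ α ω : ℝ) : Matrix (Fin 4) (Fin 4) ℝ :=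
  !![-μ, -β, ω * κ, -β * ξ;
     0, β - (γ + μ), 0, β * ξ;
     -α * κ, -α * κ, -(α * κ + ω * κ + μ), -α * κ;
     0, 0, 0, -(ρ + μ)]

section

variable (β ξ μ γ ρ κ α ω : ℝ)

theorem det_sirwjsJacobianDFE_sub_smul_one (x : ℝ) :
    (sirwjsJacobianDFE β ξ μ γ ρ κ α ω - x • 1).det =
      (β - (γ + μ) - x) * (-(α * κ + μ) - x) * (-(ω * κ + μ) - x) * (-(ρ + μ) - x) := by
  rw [sirwjsJacobianDFE, fin_four_sub_smul_one, det_fin_four_of_sparse_rows]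
  ring

theorem det_smul_one_sub_sirwjsJacobianDFE (x : ℝ) :
    (x • 1 - sirwjsJacobianDFE β ξ μ γ ρ κ α ω).det =
      (x - (β - γ - μ)) * (x + α * κ + μ) * (x + ω * κ + μ) * (x + ρ + μ) := by
  rw [← neg_sub, det_neg, det_sirwjsJacobianDFE_sub_smul_one]
  simp only [Fintype.card_fin]
  ring

theorem det_sirwjsJacobianDFE_sub_smul_one_eq_zero_iff (x : ℝ) :
    (sirwjsJacobianDFE β ξ μ γ ρ κ α ω - x • 1).det = 0 ↔
      x = β - (γ + μ) ∨ x = -(α * κ + μ) ∨ x = -(ω * κ + μ) ∨ x = -(ρ + μ) := by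
  simp only [det_sirwjsJacobianDFE_sub_smul_one, mul_eq_zero, sub_eq_zero, eq_comm, or_assoc]

theorem eigenvalues_sirwjsJacobianDFE_neg_iff (hμ : 0 < μ) (hρ : 0 < ρ)
    (hκ : 0 < κ) (hα : 0 < α) (hω : 0 < ω) :
    (∀ x : ℝ, (sirwjsJacobianDFE β ξ μ γ ρ κ α ω - x • 1).det = 0 → x < 0) ↔ β < γ + μ := by
  have hακ : -(α * κ + μ) < 0 := by linarith [mul_pos hα hκ]
  have hωκ : -(ω * κ + μ) < 0 := by linarith [mul_pos hω hκ]
  have hρμ : -(ρ + μ) < 0 := by linarith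
  simp only [det_sirwjsJacobianDFE_sub_smul_one_eq_zero_iff, forall_eq_or_imp, forall_eq,
    hακ, hρμ, hωκ, and_true, sub_neg]

end

theorem sirwjs_DFE_jacobian_eigenvalues_general
    (β ξ μ γ ρ κ α ω : ℝ)
    (hμ : 0 < μ) (hρ : 0 < ρ)
    (hκ : 0 < κ) (hα : 1 < α) (hω : 1 < ω)
    (J₀ : Matrix (Fin 4) (Fin 4) ℝ)
    (hJ₀ : J₀ = !![-μ, -β, ω * κ, -β * ξ;
                   0, β - (γ + μ), 0, β * ξ;
                   -α * κ, -α * κ, -(α * κ + ω * κ + μ), -α * κ;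
                   0, 0, 0, -(ρ + μ)]) :
    (∀ l : ℝ, (l • (1 : Matrix (Fin 4) (Fin 4) ℝ) - J₀).det =
      (l - (β - γ - μ)) * (l + α * κ + μ) * (l + ω * κ + μ) * (l + ρ + μ)) ∧
    (∀ l : ℝ, (J₀ - l • (1 : Matrix (Fin 4) (Fin 4) ℝ)).det = 0 ↔
      l = β - (γ + μ) ∨ l = -(α * κ + μ) ∨ l = -(ω * κ + μ) ∨ l = -(ρ + μ)) ∧
    ((∀ l : ℝ, (J₀ - l • (1 : Matrix (Fin 4) (Fin 4) ℝ)).det = 0 → l < 0) ↔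
      β < γ + μ) := by
  change J₀ = sirwjsJacobianDFE β ξ μ γ ρ κ α ω at hJ₀
  subst hJ₀
  exact ⟨det_smul_one_sub_sirwjsJacobianDFE β ξ μ γ ρ κ α ω,
    det_sirwjsJacobianDFE_sub_smul_one_eq_zero_iff β ξ μ γ ρ κ α ω,
    eigenvalues_sirwjsJacobianDFE_neg_iff β ξ μ γ ρ κ α ω hμ hρ hκ (by linarith) (by linarith)⟩

/-- The characteristic polynomial of the Jacobian of the reduced SIRWJS system
at the disease free equilibrium factors as
`(λ-(β-γ-μ))(λ+ακ+μ)(λ+ωκ+μ)(λ+ρ+μ)`; its eigenvalues are `β-(γ+μ)`,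
`-(ακ+μ)`, `-(ωκ+μ)`, `-(ρ+μ)`, and all of them are negative iff
`β < γ+μ` (i.e. `R₀ < 1`). -/
theorem sirwjs_DFE_jacobian_eigenvalues
    (β ξ μ γ ρ κ ν α ω : ℝ)
    (hβ : 0 < β) (hξ : 0 ≤ ξ) (hμ : 0 < μ) (hγ : 0 < γ) (hρ : 0 < ρ)
    (hκ : 0 < κ) (hν : 0 < ν) (hα : 1 < α) (hω : 1 < ω)
    (J₀ : Matrix (Fin 4) (Fin 4) ℝ)
    (hJ₀ : J₀ = !![-μ, -β, ω * κ, -β * ξ;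
                   0, β - (γ + μ), 0, β * ξ;
                   -α * κ, -α * κ, -(α * κ + ω * κ + μ), -α * κ;
                   0, 0, 0, -(ρ + μ)]) :
    (∀ l : ℝ, (l • (1 : Matrix (Fin 4) (Fin 4) ℝ) - J₀).det =
      (l - (β - γ - μ)) * (l + α * κ + μ) * (l + ω * κ + μ) * (l + ρ + μ)) ∧
    (∀ l : ℝ, (J₀ - l • (1 : Matrix (Fin 4) (Fin 4) ℝ)).det = 0 ↔
      l = β - (γ + μ) ∨ l = -(α * κ + μ) ∨ l = -(ω * κ + μ) ∨ l = -(ρ + μ)) ∧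
    ((∀ l : ℝ, (J₀ - l • (1 : Matrix (Fin 4) (Fin 4) ℝ)).det = 0 → l < 0) ↔
      β < γ + μ) :=
  sirwjs_DFE_jacobian_eigenvalues_general β ξ μ γ ρ κ α ω hμ hρ hκ hα hω J₀ hJ₀
end

section
/- Let ξ≥0, μ>0, γ>0, ρ>0, κ>0, ν>0, α>1, ω>1 with α+ω = αω, and let M be the 4×4 matrix [[-μ, -(γ+μ), ωκ, -(γ+μ)ξ], [0, 0, 0, (γ+μ)ξ], [-ακ, -ακ, -(ακ+ωκ+μ), -ακ], [0, 0, 0, -(ρ+μ)]] (the Jacobian of the reduced SIRWJS system at the disease free equilibrium with β = γ+μ). Then the vector w = ( -Q₁/((ακ+μ)(ωκ+μ)(ρ+μ)), 1, Q₀/((ακ+μ)(ωκ+μ)), 0 ) satisfies M w = 0, and the vector v = (0, 1, 0, ξ(γ+μ)/(ρ+μ)) satisfies vᵀ M = 0; i.e. w and v are right and left eigenvectors of M for the eigenvalue 0. -/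
/-!
Clearing denominators, the right kernel vector is `(-N, D, ακγ, 0)` with `D = (ακ + μ)(ωκ + μ)`
and `N = (γ + μ)(ακ + ωκ + μ) + αωκ²`, and the left kernel vector is `(0, ρ + μ, 0, ξ(γ + μ))`;
both annihilate the Jacobian by a polynomial identity. In the paper's `Q₁ / (ρ + μ)` the term
`ηκ²` is `αωκ²`, because `η = α + ω = αω`, so `-Q₁ / (D (ρ + μ)) = -N / D`.
-/

open Matrix

section

variable {R : Type*} [CommRing R]

def sirwjsJacobian (ξ μ γ ρ κ α ω : R) : Matrix (Fin 4) (Fin 4) R :=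
  !![-μ, -(γ + μ), ω * κ, -(γ + μ) * ξ;
     0, 0, 0, (γ + μ) * ξ;
     -α * κ, -α * κ, -(α * κ + ω * κ + μ), -α * κ;
     0, 0, 0, -(ρ + μ)]

theorem sirwjsJacobian_mulVec_eq_zero (ξ μ γ ρ κ α ω : R) :
    sirwjsJacobian ξ μ γ ρ κ α ω *ᵥ
      ![-((γ + μ) * (α * κ + ω * κ + μ) + α * ω * κ ^ 2), (α * κ + μ) * (ω * κ + μ),
        α * κ * γ, 0] = 0 := by
  ext i
  fin_cases i <;>
    simp [sirwjsJacobian, mulVec, dotProduct, Fin.sum_univ_four] <;> ring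

theorem sirwjsJacobian_vecMul_eq_zero (ξ μ γ ρ κ α ω : R) :
    ![0, ρ + μ, 0, ξ * (γ + μ)] ᵥ* sirwjsJacobian ξ μ γ ρ κ α ω = 0 := by
  ext i
  fin_cases i <;> simp [sirwjsJacobian, vecMul, dotProduct, Fin.sum_univ_four]
  ring

end

theorem sirwjs_DFE_critical_eigenvectors_general
    (ξ μ γ ρ κ α ω : ℝ)
    (hμ : 0 < μ) (hρ : 0 < ρ)
    (hκ : 0 < κ) (hα : 1 < α) (hω : 1 < ω)
    (hαω : α + ω = α * ω)
    (η Q₀ Q₁ : ℝ)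
    (hη : η = α + ω)
    (hQ₀ : Q₀ = α * κ * γ)
    (hQ₁ : Q₁ = ((γ + μ) * (η * κ + μ) + η * κ ^ 2) * (ρ + μ))
    (M : Matrix (Fin 4) (Fin 4) ℝ)
    (hM : M = !![-μ, -(γ + μ), ω * κ, -(γ + μ) * ξ;
                 0, 0, 0, (γ + μ) * ξ;
                 -α * κ, -α * κ, -(α * κ + ω * κ + μ), -α * κ;
                 0, 0, 0, -(ρ + μ)])
    (w v : Fin 4 → ℝ)
    (hw : w = ![-Q₁ / ((α * κ + μ) * (ω * κ + μ) * (ρ + μ)), 1,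
                Q₀ / ((α * κ + μ) * (ω * κ + μ)), 0])
    (hv : v = ![0, 1, 0, ξ * (γ + μ) / (ρ + μ)]) :
    M.mulVec w = 0 ∧ Matrix.vecMul v M = 0 := by
  have hακ : α * κ + μ ≠ 0 := by nlinarith
  have hωκ : ω * κ + μ ≠ 0 := by nlinarith
  have hρμ : ρ + μ ≠ 0 := by positivity
  have hw' : w = ((α * κ + μ) * (ω * κ + μ))⁻¹ •
      ![-((γ + μ) * (α * κ + ω * κ + μ) + α * ω * κ ^ 2), (α * κ + μ) * (ω * κ + μ),
        α * κ * γ, 0] := by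
    subst hw hQ₀ hQ₁ hη
    ext i
    fin_cases i <;> simp <;> field_simp
    rw [← hαω]
    ring
  have hv' : v = (ρ + μ)⁻¹ • ![0, ρ + μ, 0, ξ * (γ + μ)] := by
    subst hv
    ext i
    fin_cases i <;> simp <;> field_simp
  have hMJ : M = sirwjsJacobian ξ μ γ ρ κ α ω := hM
  rw [hMJ, hw', hv', mulVec_smul, smul_vecMul, sirwjsJacobian_mulVec_eq_zero,
    sirwjsJacobian_vecMul_eq_zero]
  simp

/-- Right and left eigenvectors for the zero eigenvalue of the Jacobian of the
reduced SIRWJS system at the disease free equilibrium at the critical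
transmission rate `β* = γ + μ`. -/
theorem sirwjs_DFE_critical_eigenvectors
    (ξ μ γ ρ κ ν α ω : ℝ)
    (hξ : 0 ≤ ξ) (hμ : 0 < μ) (hγ : 0 < γ) (hρ : 0 < ρ)
    (hκ : 0 < κ) (hν : 0 < ν) (hα : 1 < α) (hω : 1 < ω)
    (hαω : α + ω = α * ω)
    (η Q₀ Q₁ : ℝ)
    (hη : η = α + ω)
    (hQ₀ : Q₀ = α * κ * γ)
    (hQ₁ : Q₁ = ((γ + μ) * (η * κ + μ) + η * κ ^ 2) * (ρ + μ))
    (M : Matrix (Fin 4) (Fin 4) ℝ)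
    (hM : M = !![-μ, -(γ + μ), ω * κ, -(γ + μ) * ξ;
                 0, 0, 0, (γ + μ) * ξ;
                 -α * κ, -α * κ, -(α * κ + ω * κ + μ), -α * κ;
                 0, 0, 0, -(ρ + μ)])
    (w v : Fin 4 → ℝ)
    (hw : w = ![-Q₁ / ((α * κ + μ) * (ω * κ + μ) * (ρ + μ)), 1,
                Q₀ / ((α * κ + μ) * (ω * κ + μ)), 0])
    (hv : v = ![0, 1, 0, ξ * (γ + μ) / (ρ + μ)]) :
    M.mulVec w = 0 ∧ Matrix.vecMul v M = 0 :=
  sirwjs_DFE_critical_eigenvectors_general ξ μ γ ρ κ α ω hμ hρ hκ hα hω hαω η Q₀ Q₁ hη hQ₀ hQ₁ M hM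
    w v hw hv
end

section
/- Let β>0, μ>0, γ>0, ρ>0, κ>0, ν>0, α>1, ω>1 with α+ω = αω, and consider the SIRWJS system with ξ = 0 (non-infectious secondary compartment). Then Θ|_{ξ=0} = -Q₁ < 0, and the leading coefficient of the equilibrium quadratic satisfies A|_{ξ=0} = -νβ²ωκ(ρ+μ)Q₂ < 0; consequently, if R₀ = β/(γ+μ) > 1, the quadratic f(w) = Aw² + Bw + C is a downward parabola with positive y-intercept C and therefore has exactly one positive root, yielding a unique endemic equilibrium. -/
/-- A downward parabola with positive `y`-intercept has exactly one positive root. -/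
lemma quad_neg_lead_pos_intercept_unique_pos_root (A B C : ℝ)
    (hA : A < 0) (hC : 0 < C) :
    ∃! w : ℝ, 0 < w ∧ A * w ^ 2 + B * w + C = 0 := by
  have hAne : A ≠ 0 := ne_of_lt hA
  set D : ℝ := B ^ 2 - 4 * A * C with hD
  have hDpos : B ^ 2 < D := by nlinarith
  have hDnn : 0 ≤ D := by nlinarith [sq_nonneg B]
  set s : ℝ := Real.sqrt D with hs
  have hs2 : s ^ 2 = D := Real.sq_sqrt hDnn
  have habs : |B| < s := by
    have h1 : Real.sqrt (B ^ 2) < Real.sqrt D :=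
      Real.sqrt_lt_sqrt (sq_nonneg B) hDpos
    rwa [Real.sqrt_sq_eq_abs] at h1
  have hBs : -B < s := lt_of_le_of_lt (neg_le_abs B) habs
  set r : ℝ := (-B - s) / (2 * A) with hr
  have hrpos : 0 < r := div_pos_of_neg_of_neg (by linarith) (by linarith)
  have hr0 : A * r ^ 2 + B * r + C = 0 := by
    have key : A * r ^ 2 + B * r + C = (s ^ 2 - (B ^ 2 - 4 * A * C)) / (4 * A) := by
      rw [hr]; field_simp; ring
    rw [key, hs2, hD]; simp
  refine ⟨r, ⟨hrpos, hr0⟩, ?_⟩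
  rintro w ⟨hw, hw0⟩
  by_contra hne
  have hd : w - r ≠ 0 := sub_ne_zero.mpr hne
  have h1 : (w - r) * (A * (w + r) + B) = 0 := by linear_combination hw0 - hr0
  have h2 : A * (w + r) + B = 0 := by
    rcases mul_eq_zero.mp h1 with h | h
    · exact absurd h hd
    · exact h
  have h3 : C = A * w * r := by linear_combination hw0 - w * h2
  have h4 : A * w * r < 0 := mul_neg_of_neg_of_pos (mul_neg_of_neg_of_pos hA hw) hrpos
  linarith

/-- The case `ξ = 0` (non-infectious secondary compartment): then
`Θ = -Q₁ < 0`, the leading coefficient of the equilibrium quadratic is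
`A = -νβ²ωκ(ρ+μ)Q₂ < 0`, and for `R₀ = β/(γ+μ) > 1` the quadratic has positive
`y`-intercept `C` and exactly one positive root (the unique endemic
equilibrium). -/
theorem sirwjs_xi_zero_unique_endemic
    (β μ γ ρ κ ν α ω : ℝ)
    (hβ : 0 < β) (hμ : 0 < μ) (hγ : 0 < γ) (hρ : 0 < ρ)
    (hκ : 0 < κ) (hν : 0 < ν) (hα : 1 < α) (hω : 1 < ω)
    (hαω : α + ω = α * ω)
    (η Q₀ Q₁ Q₂ Θ A B C : ℝ)
    (hη : η = α + ω)
    (hQ₀ : Q₀ = α * κ * γ)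
    (hQ₁ : Q₁ = ((γ + μ) * (η * κ + μ) + η * κ ^ 2) * (ρ + μ))
    (hQ₂ : Q₂ = α * κ + ρ + μ)
    (hΘ : Θ = ν * 0 * (γ + μ) * Q₀ - Q₁)
    (hA : A = ν * β ^ 2 * (-ν * 0 ^ 2 * (γ + μ) * Q₀ + 0 * Q₁
      + (α * κ * (ρ + μ) - ν * 0 * μ * (γ + μ) - η * κ * (ρ + μ)) * Q₂))
    (hB : B = β * (ρ + μ) * ((ν * 0 * (γ + μ) - ν * 0 * (β - γ - μ)) * Q₀
      - Q₁ - ν * μ * (β - γ - μ) * Q₂))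
    (hC : C = (β - γ - μ) * (ρ + μ) ^ 2 * Q₀) :
    Θ = -Q₁ ∧ Θ < 0 ∧
    A = -(ν * β ^ 2 * ω * κ * (ρ + μ) * Q₂) ∧ A < 0 ∧
    (1 < β / (γ + μ) →
      0 < C ∧ ∃! w : ℝ, 0 < w ∧ A * w ^ 2 + B * w + C = 0) := by
  have hαpos : (0:ℝ) < α := by linarith
  have hωpos : (0:ℝ) < ω := by linarith
  have hηpos : (0:ℝ) < η := by rw [hη]; linarith
  have hQ₁pos : 0 < Q₁ := by
    rw [hQ₁]
    exact mul_pos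
      (add_pos (mul_pos (add_pos hγ hμ) (add_pos (mul_pos hηpos hκ) hμ))
        (mul_pos hηpos (pow_pos hκ 2)))
      (add_pos hρ hμ)
  have hQ₂pos : 0 < Q₂ := by
    rw [hQ₂]; exact add_pos (add_pos (mul_pos hαpos hκ) hρ) hμ
  have hΘeq : Θ = -Q₁ := by rw [hΘ]; ring
  have hΘneg : Θ < 0 := by rw [hΘeq]; linarith
  have hAeq : A = -(ν * β ^ 2 * ω * κ * (ρ + μ) * Q₂) := by
    rw [hA, hη]; ring
  have hAneg : A < 0 := by
    rw [hAeq]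
    have : 0 < ν * β ^ 2 * ω * κ * (ρ + μ) * Q₂ :=
      mul_pos (mul_pos (mul_pos (mul_pos (mul_pos hν (pow_pos hβ 2)) hωpos) hκ)
        (add_pos hρ hμ)) hQ₂pos
    linarith
  refine ⟨hΘeq, hΘneg, hAeq, hAneg, ?_⟩
  intro hR
  have hβγμ : 0 < β - γ - μ := by
    have h := (one_lt_div (by linarith : (0:ℝ) < γ + μ)).mp hR
    linarith
  have hCpos : 0 < C := by
    rw [hC, hQ₀]
    exact mul_pos (mul_pos hβγμ (pow_pos (add_pos hρ hμ) 2))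
      (mul_pos (mul_pos hαpos hκ) hγ)
  exact ⟨hCpos, quad_neg_lead_pos_intercept_unique_pos_root A B C hAneg hCpos⟩
end
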